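/- If Q ∈ ℂ^{n×n} is unitary with columns q₁,…,qₙ and H := Q*AQ is upper Hessenberg with nonzero subdiagonal entries h_{k+1,k} for k < n, then for every k ≤ n, span{q₁,…,q_k} = span{q₁, Aq₁, …, A^{k−1}q₁} = K_k(A, q₁). -/

import Mathlib

/-!
Write `q₀, …, q_N` for the columns of `Q`, so that `AQ = QH` reads `A qⱼ = ∑_{l ≤ j+1} h_{lj} q_l`.
Hence `A` maps `span{q₀, …, q_{k-1}}` into `span{q₀, …, q_k}`, and iterating from `q₀` puts
`K_k(A, q₀)` inside the span of the first `k` columns. Conversely, solving the same relation for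
the last term, `q_{j+1} = h_{j+1,j}⁻¹ (A qⱼ - ∑_{l ≤ j} h_{lj} q_l)`, which needs `h_{j+1,j} ≠ 0`,
puts each `q_k` into `K_{k+1}(A, q₀)` by induction.
-/

open Matrix

/-- The `m`-th polynomial Krylov space `K_m(A,b) = span{b, Ab, …, A^{m−1}b}`. -/
noncomputable def Krylov {n : ℕ} (A : Matrix (Fin n) (Fin n) ℂ) (b : Fin n → ℂ) (m : ℕ) :
    Submodule ℂ (Fin n → ℂ) :=
  Submodule.span ℂ {v | ∃ i < m, v = (A ^ i) *ᵥ b}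

lemma Krylov_mono {m : ℕ} {A : Matrix (Fin m) (Fin m) ℂ} {b : Fin m → ℂ} {k k' : ℕ}
    (h : k ≤ k') : Krylov A b k ≤ Krylov A b k' :=
  Submodule.span_mono fun _ ⟨i, hi, hv⟩ => ⟨i, hi.trans_le h, hv⟩

lemma mulVec_mem_Krylov_succ {m : ℕ} {A : Matrix (Fin m) (Fin m) ℂ} {b : Fin m → ℂ} {k : ℕ}
    {v : Fin m → ℂ} (hv : v ∈ Krylov A b k) : A *ᵥ v ∈ Krylov A b (k + 1) := by
  induction hv using Submodule.span_induction with
  | mem x hx =>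
    obtain ⟨i, hi, rfl⟩ := hx
    exact Submodule.subset_span ⟨i + 1, by omega, by rw [mulVec_mulVec, ← pow_succ']⟩
  | zero => simp
  | add x y _ _ hx hy => rw [mulVec_add]; exact add_mem hx hy
  | smul c x _ hx => rw [mulVec_smul]; exact Submodule.smul_mem _ c hx

/-- `span{q₀, …, q_{k-1}}`, which is the span of all the `qᵢ` once `k > N`. -/
noncomputable def leadingSpan {N m : ℕ} (q : Fin (N + 1) → Fin m → ℂ) (k : ℕ) :
    Submodule ℂ (Fin m → ℂ) :=
  Submodule.span ℂ {v | ∃ i : Fin (N + 1), (i : ℕ) < k ∧ v = q i}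

lemma mulVec_col_eq_sum {m N : ℕ} {A : Matrix (Fin m) (Fin m) ℂ}
    {Q : Matrix (Fin m) (Fin (N + 1)) ℂ} {H : Matrix (Fin (N + 1)) (Fin (N + 1)) ℂ}
    (hAQ : A * Q = Q * H) (j : Fin (N + 1)) :
    A *ᵥ (fun r => Q r j) = ∑ l, H l j • fun r => Q r l := by
  funext r
  have hentry := congrFun (congrFun hAQ r) j
  simp only [Matrix.mul_apply] at hentry
  simpa [Matrix.mulVec, dotProduct, Finset.sum_apply, mul_comm] using hentry

section Hessenberg

variable {N m : ℕ} {A : Matrix (Fin m) (Fin m) ℂ} {q : Fin (N + 1) → Fin m → ℂ}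
  {H : Matrix (Fin (N + 1)) (Fin (N + 1)) ℂ}

lemma leadingSpan_mono {k k' : ℕ} (h : k ≤ k') : leadingSpan q k ≤ leadingSpan q k' :=
  Submodule.span_mono fun _ ⟨i, hi, hv⟩ => ⟨i, hi.trans_le h, hv⟩

lemma mem_leadingSpan {i : Fin (N + 1)} {k : ℕ} (hi : (i : ℕ) < k) : q i ∈ leadingSpan q k :=
  Submodule.subset_span ⟨i, hi, rfl⟩

lemma mulVec_mem_leadingSpan_succ (hcol : ∀ j, A *ᵥ q j = ∑ l, H l j • q l)
    (hHess : ∀ i j : Fin (N + 1), (j : ℕ) + 1 < (i : ℕ) → H i j = 0) {k : ℕ}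
    {v : Fin m → ℂ} (hv : v ∈ leadingSpan q k) : A *ᵥ v ∈ leadingSpan q (k + 1) := by
  induction hv using Submodule.span_induction with
  | mem x hx =>
    obtain ⟨j, hj, rfl⟩ := hx
    rw [hcol j]
    refine Submodule.sum_mem _ fun l _ => ?_
    by_cases hl : (l : ℕ) ≤ (j : ℕ) + 1
    · exact Submodule.smul_mem _ _ (mem_leadingSpan (by omega))
    · simp [hHess l j (by omega)]
  | zero => simp
  | add x y _ _ hx hy => rw [mulVec_add]; exact add_mem hx hy
  | smul c x _ hx => rw [mulVec_smul]; exact Submodule.smul_mem _ c hx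

lemma pow_mulVec_mem_leadingSpan (hcol : ∀ j, A *ᵥ q j = ∑ l, H l j • q l)
    (hHess : ∀ i j : Fin (N + 1), (j : ℕ) + 1 < (i : ℕ) → H i j = 0) (i : ℕ) :
    (A ^ i) *ᵥ q 0 ∈ leadingSpan q (i + 1) := by
  induction i with
  | zero => simpa using mem_leadingSpan (q := q) (i := 0) Nat.one_pos
  | succ i ih =>
    rw [pow_succ', ← mulVec_mulVec]
    exact mulVec_mem_leadingSpan_succ hcol hHess ih

lemma Krylov_le_leadingSpan (hcol : ∀ j, A *ᵥ q j = ∑ l, H l j • q l)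
    (hHess : ∀ i j : Fin (N + 1), (j : ℕ) + 1 < (i : ℕ) → H i j = 0) (k : ℕ) :
    Krylov A (q 0) k ≤ leadingSpan q k :=
  Submodule.span_le.mpr fun _ ⟨i, hi, hv⟩ =>
    hv ▸ leadingSpan_mono (by omega) (pow_mulVec_mem_leadingSpan hcol hHess i)

lemma mulVec_sub_smul_mem_leadingSpan (hcol : ∀ j, A *ᵥ q j = ∑ l, H l j • q l)
    (hHess : ∀ i j : Fin (N + 1), (j : ℕ) + 1 < (i : ℕ) → H i j = 0) {j l : Fin (N + 1)}
    (hl : (l : ℕ) = j + 1) : A *ᵥ q j - H l j • q l ∈ leadingSpan q (j + 1) := by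
  rw [hcol j, ← Finset.add_sum_erase _ _ (Finset.mem_univ l), add_sub_cancel_left]
  refine Submodule.sum_mem _ fun x hx => ?_
  have hxl : (x : ℕ) ≠ l := fun h => Finset.ne_of_mem_erase hx (Fin.ext h)
  by_cases hxj : (x : ℕ) ≤ j
  · exact Submodule.smul_mem _ _ (mem_leadingSpan (by omega))
  · simp [hHess x j (by omega)]

lemma leadingSpan_le_Krylov (hcol : ∀ j, A *ᵥ q j = ∑ l, H l j • q l)
    (hHess : ∀ i j : Fin (N + 1), (j : ℕ) + 1 < (i : ℕ) → H i j = 0)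
    (hSub : ∀ i j : Fin (N + 1), (i : ℕ) = (j : ℕ) + 1 → H i j ≠ 0) (k : ℕ) :
    leadingSpan q k ≤ Krylov A (q 0) k := by
  induction k with
  | zero => exact Submodule.span_le.mpr fun _ ⟨i, hi, _⟩ => absurd hi (Nat.not_lt_zero _)
  | succ k ih =>
    refine Submodule.span_le.mpr ?_
    rintro _ ⟨l, hl, rfl⟩
    rcases Nat.lt_succ_iff_lt_or_eq.mp hl with hlt | hlk
    · exact Krylov_mono (Nat.le_succ k) (ih (mem_leadingSpan hlt))
    obtain rfl | ⟨j, rfl⟩ := Fin.eq_zero_or_eq_succ l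
    · exact Submodule.subset_span ⟨0, Nat.succ_pos k, by simp⟩
    have hsucc : ((Fin.succ j : Fin (N + 1)) : ℕ) = (Fin.castSucc j : ℕ) + 1 := rfl
    have hsplit : q j.succ = (H j.succ j.castSucc)⁻¹ •
        (A *ᵥ q j.castSucc - (A *ᵥ q j.castSucc - H j.succ j.castSucc • q j.succ)) := by
      rw [sub_sub_cancel, inv_smul_smul₀ (hSub _ _ hsucc)]
    have hk : (Fin.castSucc j : ℕ) + 1 = k := by omega
    rw [hsplit]
    refine Submodule.smul_mem _ _ (Submodule.sub_mem _ ?_ ?_)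
    · exact mulVec_mem_Krylov_succ (ih (mem_leadingSpan (by omega)))
    · exact Krylov_mono (Nat.le_succ k)
        (ih (hk ▸ mulVec_sub_smul_mem_leadingSpan hcol hHess hsucc))

end Hessenberg

/-- If `Q` is unitary and `H = Q*AQ` is upper Hessenberg with nonzero subdiagonal
entries, then the span of the first `k` columns of `Q` equals the Krylov space
`K_k(A, q₁)` generated by the first column, for every `k ≤ n`. -/
theorem arnoldi_span_eq_krylov {n : ℕ} (A Q : Matrix (Fin (n+1)) (Fin (n+1)) ℂ)
    (hQ : Qᴴ * Q = 1)
    (hHess : ∀ i j : Fin (n+1), (j : ℕ) + 1 < (i : ℕ) → (Qᴴ * A * Q) i j = 0)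
    (hSub : ∀ i j : Fin (n+1), (i : ℕ) = (j : ℕ) + 1 → (Qᴴ * A * Q) i j ≠ 0) :
    ∀ k ≤ n + 1,
      Submodule.span ℂ {v | ∃ i : Fin (n+1), (i : ℕ) < k ∧ v = fun r => Q r i}
        = Krylov A (fun r => Q r 0) k := by
  have hAQ : A * Q = Q * (Qᴴ * A * Q) := by
    rw [← Matrix.mul_assoc, ← Matrix.mul_assoc, mul_eq_one_comm.mp hQ, Matrix.one_mul]
  have hcol := mulVec_col_eq_sum hAQ
  intro k _
  exact le_antisymm (leadingSpan_le_Krylov hcol hHess hSub k) (Krylov_le_leadingSpan hcol hHess k)
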